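/- Let (X,d) be a Λ-ALLC metric space and let Γ ⊆ X be a Jordan curve satisfying the λ-three-point condition (i.e., for distinct x, y ∈ Γ, the component of Γ \ {x,y} of minimal diameter has diameter at most λ·d(x,y)). Then Γ is C-porous in X, where C depends only on Λ and λ. -/

import Mathlib

open Metric

/-- The open annulus `A(a, r, R) = {y : r < d(a,y) < R}`. -/
def metricAnnulus {X : Type*} [MetricSpace X] (a : X) (r R : ℝ) : Set X :=
  {y | r < dist a y ∧ dist a y < R}

/-- `Λ`-ALLC: each pair of distinct points of an annulus `A(a,r,R)` (with `0 ≤ r < R`) lies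
in a continuum contained in `A(a, r/Λ, ΛR)`. -/
def IsALLC (X : Type*) [MetricSpace X] (Λ : ℝ) : Prop :=
  ∀ (a : X) (r R : ℝ), 0 ≤ r → r < R →
    ∀ x ∈ metricAnnulus a r R, ∀ y ∈ metricAnnulus a r R, x ≠ y →
      ∃ E : Set X, IsCompact E ∧ IsConnected E ∧ x ∈ E ∧ y ∈ E ∧
        E ⊆ metricAnnulus a (r / Λ) (Λ * R)

/-- `Γ` is a Jordan curve: the image of an injective continuous map of the circle. -/
def IsJordanCurve {X : Type*} [MetricSpace X] (Γ : Set X) : Prop :=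
  ∃ f : C(Circle, X), Function.Injective f ∧ Set.range f = Γ

/-- The `λ`-three-point condition: for distinct `x, y ∈ Γ`, some connected component of
`Γ \ {x,y}` has diameter at most `λ · d(x,y)` (equivalently, the component of minimal
diameter does). -/
def ThreePointCondition {X : Type*} [MetricSpace X] (Γ : Set X) (lam : ℝ) : Prop :=
  ∀ x ∈ Γ, ∀ y ∈ Γ, x ≠ y → ∃ z ∈ Γ \ {x, y},
    diam (connectedComponentIn (Γ \ {x, y}) z) ≤ lam * dist x y

/-- `Γ` is `C`-porous in `X`. -/
def IsPorous {X : Type*} [MetricSpace X] (Γ : Set X) (C : ℝ) : Prop :=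
  ∀ z ∈ Γ, ∀ r : ℝ, 0 < r → r ≤ diam (Set.univ : Set X) →
    ∃ x : X, ball x (r / C) ⊆ ball z r \ Γ


/-!
If the curve lies in `closedBall z (r / 16)`, the ALLC condition joins `z` to a point at
distance `> r / 4` by a continuum, and the point of that continuum at distance `r / 4` from `z`
is the centre of the hole.

Otherwise pick `w ∈ Γ` with `d(z, w) > r / 16` and points `x`, `y` at distance `s ≍ r / Λ` from
`z` on the two arcs of `Γ` between `z` and `w`. The ALLC continuum `E` joining `x` and `y` stays
in an annulus around `z` that is far from `w`. If `E` lay in the `ρ`-neighbourhood of `Γ`, then,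
`E` being connected, some `e ∈ E` would be `ρ`-close to points `p`, `q` of both arcs. These
separate `z` from `w` on `Γ`, so the three-point condition puts `p` within `2λρ` of `z` or of
`w`, which the annulus forbids. Hence some point of `E` is `ρ`-far from `Γ`.
-/

open Set Function Real Bornology

variable {X : Type*} [MetricSpace X]

/-- A Jordan curve `f` read as `f ∘ Circle.exp`, so that its arcs are images of intervals. -/
structure IsJordanParam (F : ℝ → X) : Prop where
  continuous : Continuous F
  periodic : Periodic F (2 * π)
  injOn_Ico : ∀ c, InjOn F (Ico c (c + 2 * π))

theorem IsJordanCurve.exists_isJordanParam {Γ : Set X} (h : IsJordanCurve Γ) :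
    ∃ F : ℝ → X, IsJordanParam F ∧ range F = Γ := by
  obtain ⟨f, hf, rfl⟩ := h
  refine ⟨f ∘ Circle.exp, ⟨f.continuous.comp Circle.exp.continuous,
    fun θ => congrArg f (Circle.periodic_exp θ),
    fun c => hf.injOn.comp (Circle.exp_injOn_Ico (by linarith)) (mapsTo_univ _ _)⟩, ?_⟩
  rw [range_comp, Circle.exp_surjective.range_eq, image_univ]

namespace IsJordanParam

variable {F : ℝ → X} (hF : IsJordanParam F)
include hF

theorem image_Ico (c : ℝ) : F '' Ico c (c + 2 * π) = range F :=
  (image_subset_range _ _).antisymm <| range_subset_iff.2 fun θ =>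
    let ⟨θ', hθ', h⟩ := hF.periodic.exists_mem_Ico two_pi_pos θ c
    ⟨θ', hθ', h.symm⟩

theorem isCompact_range : IsCompact (range F) :=
  hF.periodic.compact_of_continuous two_pi_pos.ne' hF.continuous

theorem infinite_range : (range F).Infinite :=
  ((infinite_image_iff (hF.injOn_Ico 0)).2 (Ico_infinite (by linarith [two_pi_pos]))).mono
    (image_subset_range _ _)

theorem image_Ioo_union_image_Ioo {a b : ℝ} (hab : a < b) (hb : b < a + 2 * π) :
    F '' Ioo a b ∪ F '' Ioo b (a + 2 * π) = range F \ {F a, F b} := by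
  have hsplit : Ioo a b ∪ Ioo b (a + 2 * π) = Ico a (a + 2 * π) \ {a, b} := by
    ext t
    simp only [mem_union, mem_Ioo, mem_sdiff, mem_Ico, mem_insert_iff, mem_singleton_iff]
    grind
  rw [← image_union, hsplit, (hF.injOn_Ico a).image_sdiff_subset, image_pair,
    hF.image_Ico]
  exact pair_subset ⟨le_rfl, hab.trans hb⟩ ⟨hab.le, hb⟩

theorem exists_dist_eq_on_arcs {a b s : ℝ} (hab : a ≤ b) (hb : b ≤ a + 2 * π) (hs : 0 < s)
    (hsb : s < dist (F a) (F b)) :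
    ∃ θ ∈ Ioo a b, ∃ θ' ∈ Ioo b (a + 2 * π), dist (F a) (F θ) = s ∧ dist (F a) (F θ') = s := by
  have hcont : Continuous fun θ => dist (F a) (F θ) := continuous_const.dist hF.continuous
  obtain ⟨θ, hθ, hθs⟩ := intermediate_value_Ioo hab hcont.continuousOn
    (show s ∈ Ioo (dist (F a) (F a)) _ by rw [dist_self]; exact ⟨hs, hsb⟩)
  obtain ⟨θ', hθ', hθ's⟩ := intermediate_value_Ioo' hb hcont.continuousOn
    (show s ∈ Ioo (dist (F a) (F (a + 2 * π))) _ by rw [hF.periodic, dist_self]; exact ⟨hs, hsb⟩)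
  exact ⟨θ, hθ, θ', hθ', hθs, hθ's⟩

end IsJordanParam

theorem Continuous.diam_image_Icc_le {F : ℝ → X} (hF : Continuous F) {a b : ℝ} (hab : a < b)
    {J : Set X} (hJ : IsBounded J) (h : F '' Ioo a b ⊆ J) : diam (F '' Icc a b) ≤ diam J := by
  have hcl : F '' Icc a b ⊆ closure J := by
    rw [← closure_Ioo hab.ne]
    exact (image_closure_subset_closure_image hF).trans (closure_mono h)
  exact (diam_mono hcl hJ.closure).trans (diam_closure J).le

section ThreePoint

variable {F : ℝ → X} {lam : ℝ}

/-- The usual arc form of the three-point condition. -/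
theorem ThreePointCondition.diam_arc_le (hΓ : ThreePointCondition (range F) lam)
    (hF : IsJordanParam F) {a b : ℝ} (hab : a < b) (hb : b < a + 2 * π) :
    diam (F '' Icc a b) ≤ lam * dist (F a) (F b) ∨
      diam (F '' Icc b (a + 2 * π)) ≤ lam * dist (F a) (F b) := by
  have hsplit := hF.image_Ioo_union_image_Ioo hab hb
  have hne : F a ≠ F b := fun h =>
    hab.ne (hF.injOn_Ico a ⟨le_rfl, hab.trans hb⟩ ⟨hab.le, hb⟩ h)
  obtain ⟨ζ, hζ, hJ⟩ := hΓ _ (mem_range_self a) _ (mem_range_self b) hne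
  have hJb : IsBounded (connectedComponentIn (range F \ {F a, F b}) ζ) :=
    hF.isCompact_range.isBounded.subset ((connectedComponentIn_subset _ _).trans sdiff_subset)
  have harc : ∀ {c d : ℝ}, c < d → F '' Ioo c d ⊆ range F \ {F a, F b} → ζ ∈ F '' Ioo c d →
      diam (F '' Icc c d) ≤ lam * dist (F a) (F b) := fun hcd hsub hζ' =>
    (hF.continuous.diam_image_Icc_le hcd hJb
      ((isPreconnected_Ioo.image _ hF.continuous.continuousOn).subset_connectedComponentIn
        hζ' hsub)).trans hJ
  rw [← hsplit] at hζ
  rcases hζ with hζ | hζ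
  · exact Or.inl (harc hab (hsplit ▸ subset_union_left) hζ)
  · exact Or.inr (harc hb (hsplit ▸ subset_union_right) hζ)

/-- If `F s₁` and `F s₂` separate `F α` from `F β` on the curve, then `F s₁` is close to one of
them. -/
theorem ThreePointCondition.dist_le_or_dist_le (hΓ : ThreePointCondition (range F) lam)
    (hF : IsJordanParam F) {α s₁ β s₂ : ℝ} (h₁ : α < s₁) (h₂ : s₁ < β) (h₃ : β < s₂)
    (h₄ : s₂ < α + 2 * π) :
    dist (F s₁) (F β) ≤ lam * dist (F s₁) (F s₂) ∨
      dist (F s₁) (F α) ≤ lam * dist (F s₁) (F s₂) := by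
  have hbdd : ∀ c d : ℝ, IsBounded (F '' Icc c d) := fun c d =>
    (isCompact_Icc.image hF.continuous).isBounded
  refine (hΓ.diam_arc_le hF (h₂.trans h₃) (by linarith)).imp (fun h => ?_) (fun h => ?_)
  · exact (dist_le_diam_of_mem (hbdd _ _) (mem_image_of_mem F (left_mem_Icc.2 (h₂.trans h₃).le))
      (mem_image_of_mem F ⟨h₂.le, h₃.le⟩)).trans h
  · calc dist (F s₁) (F α) = dist (F (s₁ + 2 * π)) (F (α + 2 * π)) := by
          rw [hF.periodic, hF.periodic]
      _ ≤ diam (F '' Icc s₂ (s₁ + 2 * π)) :=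
          dist_le_diam_of_mem (hbdd _ _) (mem_image_of_mem F ⟨by linarith, le_rfl⟩)
            (mem_image_of_mem F ⟨h₄.le, by linarith⟩)
      _ ≤ _ := h

end ThreePoint

theorem IsPreconnected.exists_dist_lt_of_subset_thickening {E U V : Set X} (hE : IsPreconnected E)
    {ρ : ℝ} (hρ : 0 < ρ) (hEUV : E ⊆ thickening ρ U ∪ thickening ρ V) {x y : X}
    (hx : x ∈ E ∩ U) (hy : y ∈ E ∩ V) :
    ∃ e ∈ E, ∃ p ∈ U, ∃ q ∈ V, dist e p < ρ ∧ dist e q < ρ := by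
  obtain ⟨e, he, hU, hV⟩ := hE _ _ isOpen_thickening isOpen_thickening hEUV
    ⟨x, hx.1, self_subset_thickening hρ U hx.2⟩ ⟨y, hy.1, self_subset_thickening hρ V hy.2⟩
  obtain ⟨p, hp, hep⟩ := mem_thickening_iff.1 hU
  obtain ⟨q, hq, heq⟩ := mem_thickening_iff.1 hV
  exact ⟨e, he, p, hp, q, hq, hep, heq⟩

theorem exists_lt_dist_of_two_mul_lt_diam {s : Set X} (z : X) {t : ℝ} (ht : 0 ≤ t)
    (h : 2 * t < diam s) : ∃ u ∈ s, t < dist z u := by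
  by_contra! H
  exact (diam_le_of_subset_closedBall ht fun u hu => mem_closedBall'.2 (H u hu)).not_gt h

theorem ball_subset_ball_sdiff {Γ : Set X} {z e : X} {ρ r : ℝ} (hr : ρ + dist e z ≤ r)
    (hΓ : ∀ γ ∈ Γ, ρ ≤ dist e γ) : ball e ρ ⊆ ball z r \ Γ :=
  subset_sdiff.2 ⟨ball_subset_ball' hr,
    disjoint_left.2 fun γ hγ hγΓ => (hΓ γ hγΓ).not_gt (mem_ball'.1 hγ)⟩

namespace IsALLC

variable {Λ : ℝ} (hX : IsALLC X Λ)
include hX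

theorem exists_dist_eq {a z u : X} (haz : a ≠ z) (hau : a ≠ u) {t : ℝ} (ht : 0 ≤ t)
    (htu : t ≤ dist z u) : ∃ p, dist z p = t := by
  rcases eq_or_ne z u with rfl | hzu
  · exact ⟨z, by rw [dist_self] at htu ⊢; linarith⟩
  set R := dist a z + dist a u + 1
  obtain ⟨E, -, hE, hzE, huE, -⟩ := hX a 0 R le_rfl (by positivity) z
    ⟨dist_pos.2 haz, by linarith [dist_nonneg (x := a) (y := u)]⟩ u
    ⟨dist_pos.2 hau, by linarith [dist_nonneg (x := a) (y := z)]⟩ hzu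
  obtain ⟨p, -, hp⟩ := hE.isPreconnected.intermediate_value hzE huE
    (continuous_const.dist continuous_id).continuousOn (show t ∈ Icc (dist z z) (dist z u) by
      rw [dist_self]; exact ⟨ht, htu⟩)
  exact ⟨p, hp⟩

theorem exists_far_from_quasicircle (hΛ : 1 ≤ Λ) {F : ℝ → X} (hF : IsJordanParam F) {lam : ℝ}
    (hΓ : ThreePointCondition (range F) lam) (hlam : 0 ≤ lam) {z w : X} (hz : z ∈ range F)
    (hw : w ∈ range F) {s ρ : ℝ} (hs : 0 < s) (hρ : 0 < ρ)
    (hρs : (2 * lam + 1) * ρ ≤ s / 2 / Λ) (hρw : Λ * (2 * s) + (2 * lam + 1) * ρ ≤ dist z w) :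
    ∃ e, dist z e < Λ * (2 * s) ∧ ∀ γ ∈ range F, ρ ≤ dist e γ := by
  obtain ⟨α, rfl⟩ := hz
  rw [← hF.image_Ico α] at hw
  obtain ⟨β, hβ, rfl⟩ := hw
  have hsw : s < dist (F α) (F β) := by nlinarith
  have hαβ : α < β := hβ.1.lt_of_ne (by rintro rfl; rw [dist_self] at hsw; linarith)
  obtain ⟨θx, hθx, θy, hθy, hx, hy⟩ := hF.exists_dist_eq_on_arcs hαβ.le hβ.2.le hs hsw
  have hxy : F θx ≠ F θy := fun h => (hθx.2.trans hθy.1).ne <| hF.injOn_Ico α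
    ⟨hθx.1.le, by linarith [hθx.2, hβ.2]⟩ ⟨by linarith [hθy.1], hθy.2⟩ h
  obtain ⟨E, -, hE, hxE, hyE, hEann⟩ := hX (F α) (s / 2) (2 * s) (by positivity) (by linarith)
    _ ⟨by linarith, by linarith⟩ _ ⟨by linarith, by linarith⟩ hxy
  by_contra! hnear
  have hcover : E ⊆ thickening ρ (F '' Ioo α β) ∪ thickening ρ (F '' Ioo β (α + 2 * π)) := by
    intro e he
    obtain ⟨hlow, hhigh⟩ := hEann he
    obtain ⟨γ, hγ, heγ⟩ := hnear e hhigh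
    rw [← thickening_union, hF.image_Ioo_union_image_Ioo hαβ hβ.2]
    refine mem_thickening_iff.2 ⟨γ, ⟨hγ, ?_⟩, heγ⟩
    rintro (rfl | rfl)
    · rw [dist_comm] at heγ; nlinarith
    · nlinarith [dist_triangle (F α) e (F β)]
  obtain ⟨e, he, _, ⟨s₁, hs₁, rfl⟩, _, ⟨s₂, hs₂, rfl⟩, hep, heq⟩ :=
    hE.isPreconnected.exists_dist_lt_of_subset_thickening hρ hcover
      ⟨hxE, mem_image_of_mem F hθx⟩ ⟨hyE, mem_image_of_mem F hθy⟩
  have hpq : lam * dist (F s₁) (F s₂) ≤ lam * (2 * ρ) :=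
    mul_le_mul_of_nonneg_left (by linarith [dist_triangle_left (F s₁) (F s₂) e]) hlam
  obtain ⟨hlow, hhigh⟩ := hEann he
  rcases hΓ.dist_le_or_dist_le hF hs₁.1 hs₁.2 hs₂.1 hs₂.2 with h | h
  · linarith [dist_triangle4 (F α) e (F s₁) (F β)]
  · linarith [dist_triangle (F α) (F s₁) e, dist_comm (F α) (F s₁), dist_comm (F s₁) e]

end IsALLC

/-- In a `Λ`-ALLC metric space, a quasicircle (a Jordan curve satisfying the `λ`-three-point
condition) is `C`-porous, with `C` depending only on `Λ` and `λ`. -/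
theorem quasicircle_porous_in_ALLC (Λ lam : ℝ) (hΛ : 1 ≤ Λ) (hlam : 1 ≤ lam) :
    ∃ C ≥ (1 : ℝ), ∀ (X : Type) [MetricSpace X], IsALLC X Λ →
      ∀ Γ : Set X, IsJordanCurve Γ → ThreePointCondition Γ lam → IsPorous Γ C := by
  refine ⟨400 * Λ ^ 2 * lam, by nlinarith, fun X _ hX Γ hJ hΓ z hz r hr hrX => ?_⟩
  obtain ⟨F, hF, rfl⟩ := hJ.exists_isJordanParam
  set ρ := r / (400 * Λ ^ 2 * lam)
  have hρ : 0 < ρ := by positivity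
  have hρΛ : (2 * lam + 1) * ρ ≤ r / (128 * Λ ^ 2) := by
    rw [mul_div_assoc', div_le_div_iff₀ (by positivity) (by positivity)]
    nlinarith [mul_nonneg (mul_nonneg hr.le (sq_nonneg Λ)) (sub_nonneg.2 hlam)]
  have hρr : (2 * lam + 1) * ρ ≤ r / 128 :=
    hρΛ.trans (div_le_div_of_nonneg_left hr.le (by norm_num) (by nlinarith))
  have hρ1 : ρ ≤ r / 128 := by nlinarith
  by_cases hsmall : range F ⊆ closedBall z (r / 16)
  · obtain ⟨u, -, hu⟩ := exists_lt_dist_of_two_mul_lt_diam (s := univ) z (t := r / 4)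
      (by positivity) (by linarith)
    obtain ⟨a, -, hazu⟩ := (hF.infinite_range.sdiff (toFinite {z, u})).nonempty
    obtain ⟨p, hp⟩ := hX.exists_dist_eq (a := a) (fun h => hazu (Or.inl h))
      (fun h => hazu (Or.inr h)) (by positivity) hu.le
    refine ⟨p, ball_subset_ball_sdiff (by rw [dist_comm, hp]; linarith) fun γ hγ => ?_⟩
    linarith [mem_closedBall.1 (hsmall hγ), dist_triangle z γ p, dist_comm γ z, dist_comm γ p]
  · obtain ⟨w, hw, hzw⟩ := not_subset.1 hsmall
    have hΛs : Λ * (2 * (r / (64 * Λ))) = r / 32 := by field_simp; norm_num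
    obtain ⟨e, hze, he⟩ := hX.exists_far_from_quasicircle hΛ hF hΓ (by linarith) hz hw
      (s := r / (64 * Λ)) (by positivity) hρ (by convert hρΛ using 1; field_simp; norm_num)
      (by rw [hΛs, dist_comm]; linarith [not_le.1 (mt mem_closedBall.2 hzw)])
    exact ⟨e, ball_subset_ball_sdiff (by rw [dist_comm]; linarith) he⟩
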